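/- For every p ≥ 5, the cycle C_p cannot be explained by any tree T with leaf set V(C_p) and non-negative integer edge weights with respect to the exactly-2-relation (regardless of whether distinct leaves may be at distance 0). -/

import Mathlib

/-!
Write `x j` for the leaf of the `j`-th cycle vertex. Consecutive leaves are at tree distance 2,
leaves two or three steps apart are not. Taking a median of `x j, x (j+1), x (j+2)` shows that
`d(x j, x (j+2))` is `0`, `2` or `4`; it is not `0`, since then `x (j+3)` would be at distance 2
from `x j`, so it is `4`. The four-point condition of tree metrics then makes betweenness
propagate along the sequence, giving `d(x 0, x j) = 2 j`. For `j = p - 1` this contradicts the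
adjacency of the cycle vertices `0` and `p - 1`.
-/

open SimpleGraph

noncomputable def treePath {V : Type} (T : SimpleGraph V) (hT : T.IsTree) (x y : V) :
    T.Walk x y := (hT.existsUnique_path x y).choose

/-- The weighted distance between two vertices of a tree: the sum of the weights
`lam` over the edges of the unique path. -/
noncomputable def treeDist {V : Type} (T : SimpleGraph V) (hT : T.IsTree)
    (lam : Sym2 V → ℕ) (x y : V) : ℕ :=
  ((treePath T hT x y).edges.map lam).sum

/-- A leaf of a tree: a vertex of degree at most one. -/
def IsLeaf {V : Type} (T : SimpleGraph V) (v : V) : Prop :=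
  (T.neighborSet v).ncard ≤ 1

/-- `(T, lam)` explains the graph `G` w.r.t. the exactly-`k`-relation, where
`f` identifies the vertices of `G` with the leaves of `T`. -/
def ExplainedBy {α V : Type} (G : SimpleGraph α) (T : SimpleGraph V) (hT : T.IsTree)
    (lam : Sym2 V → ℕ) (f : α → V) (k : ℕ) : Prop :=
  Function.Injective f ∧ (∀ v : V, (∃ a, f a = v) ↔ IsLeaf T v) ∧
    (∀ x y : α, G.Adj x y ↔ treeDist T hT lam (f x) (f y) = k)

/-- `G` can be explained w.r.t. the exactly-`k`-relation by some finite edge-weighted tree. -/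
def Explainable {α : Type} (G : SimpleGraph α) (k : ℕ) : Prop :=
  ∃ (V : Type) (_ : Finite V) (T : SimpleGraph V) (hT : T.IsTree) (lam : Sym2 V → ℕ)
    (f : α → V), ExplainedBy G T hT lam f k

/-- `G` can be explained w.r.t. the exactly-`k`-relation by a tree in which all pairs of
distinct leaves are at positive weighted distance (discrete 0-relation). -/
def ExplainableDiscrete {α : Type} (G : SimpleGraph α) (k : ℕ) : Prop :=
  ∃ (V : Type) (_ : Finite V) (T : SimpleGraph V) (hT : T.IsTree) (lam : Sym2 V → ℕ)
    (f : α → V), ExplainedBy G T hT lam f k ∧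
      ∀ x y : α, x ≠ y → treeDist T hT lam (f x) (f y) ≠ 0


namespace SimpleGraph.Walk

theorem IsPath.append_of_support_inter {V : Type*} {G : SimpleGraph V} {u v w : V}
    {p : G.Walk u v} {q : G.Walk v w} (hp : p.IsPath) (hq : q.IsPath)
    (hpq : ∀ x ∈ p.support, x ∈ q.support → x = v) : (p.append q).IsPath := by
  rw [isPath_def, support_append]
  refine hp.support_nodup.append hq.support_nodup.tail fun x hx hx' => ?_
  have hq' := hq.support_nodup
  rw [← q.cons_tail_support] at hq'
  obtain rfl := hpq x hx (q.cons_tail_support ▸ List.mem_cons_of_mem _ hx')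
  exact (List.nodup_cons.mp hq').1 hx'

end SimpleGraph.Walk

section TreeDist

variable {V : Type} {T : SimpleGraph V} (hT : T.IsTree) (lam : Sym2 V → ℕ)

local notation "δ" => treeDist T hT lam

theorem treePath_isPath (x y : V) : (treePath T hT x y).IsPath :=
  (hT.existsUnique_path x y).choose_spec.1

theorem eq_treePath_of_isPath {x y : V} {p : T.Walk x y} (hp : p.IsPath) :
    p = treePath T hT x y :=
  (hT.existsUnique_path x y).choose_spec.2 p hp

theorem treeDist_eq_of_isPath {x y : V} {p : T.Walk x y} (hp : p.IsPath) :
    δ x y = (p.edges.map lam).sum := by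
  rw [treeDist, ← eq_treePath_of_isPath hT hp]

theorem treeDist_self (x : V) : δ x x = 0 :=
  treeDist_eq_of_isPath hT lam Walk.IsPath.nil

theorem treeDist_comm (x y : V) : δ x y = δ y x := by
  rw [treeDist_eq_of_isPath hT lam (treePath_isPath hT y x).reverse, Walk.edges_reverse,
    List.map_reverse, List.sum_reverse, treeDist]

theorem mem_support_treePath_comm {x y w : V} (h : w ∈ (treePath T hT x y).support) :
    w ∈ (treePath T hT y x).support := by
  rwa [← eq_treePath_of_isPath hT (treePath_isPath hT y x).reverse, Walk.support_reverse,
    List.mem_reverse] at h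

theorem treeDist_eq_add_of_mem_support {x y w : V} (h : w ∈ (treePath T hT x y).support) :
    δ x y = δ x w + δ w y := by
  classical
  have hp := treePath_isPath hT x y
  rw [treeDist, ← Walk.take_spec _ h, Walk.edges_append, List.map_append, List.sum_append,
    ← treeDist_eq_of_isPath hT lam (hp.takeUntil h),
    ← treeDist_eq_of_isPath hT lam (hp.dropUntil h)]

theorem mem_support_treePath_or {x y z w : V} (h : w ∈ (treePath T hT x z).support) :
    w ∈ (treePath T hT x y).support ∨ w ∈ (treePath T hT z y).support := by
  classical
  let p := (treePath T hT x y).append (treePath T hT y z)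
  rw [← eq_treePath_of_isPath hT p.bypass_isPath] at h
  refine (Walk.mem_support_append_iff _ _).mp (p.support_bypass_subset_support h) |>.imp id ?_
  exact mem_support_treePath_comm hT

/-- The vertex of the path `y – z` closest to `x` (in number of edges) lies on all three paths. -/
theorem exists_median (x y z : V) : ∃ m, m ∈ (treePath T hT x y).support ∧
    m ∈ (treePath T hT x z).support ∧ m ∈ (treePath T hT y z).support := by
  classical
  set P := treePath T hT y z
  obtain ⟨m, hmP, hmin⟩ := P.support.toFinset.exists_min_image
    (fun v => (treePath T hT x v).length) ⟨y, by simp⟩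
  rw [List.mem_toFinset] at hmP
  have hmeet : ∀ u ∈ (treePath T hT x m).support, u ∈ P.support → u = m := by
    intro u hu huP
    by_contra hne
    have hlt := (treePath T hT x m).length_takeUntil_lt_length hu hne
    rw [eq_treePath_of_isPath hT ((treePath_isPath hT x m).takeUntil hu)] at hlt
    exact (hmin u (List.mem_toFinset.mpr huP)).not_gt hlt
  have hP := treePath_isPath hT y z
  have hxz := (treePath_isPath hT x m).append_of_support_inter (hP.dropUntil hmP)
    fun u hu hu' => hmeet u hu (P.support_dropUntil_subset_support hmP hu')
  have hxy := (treePath_isPath hT x m).append_of_support_inter (hP.takeUntil hmP).reverse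
    fun u hu hu' => hmeet u hu <| P.support_takeUntil_subset_support hmP <| by
      rwa [Walk.support_reverse, List.mem_reverse] at hu'
  refine ⟨m, ?_, ?_, hmP⟩
  · rw [← eq_treePath_of_isPath hT hxy, Walk.mem_support_append_iff]
    exact Or.inl (Walk.end_mem_support _)
  · rw [← eq_treePath_of_isPath hT hxz, Walk.mem_support_append_iff]
    exact Or.inl (Walk.end_mem_support _)

theorem treeDist_triangle (x y z : V) : δ x z ≤ δ x y + δ y z := by
  obtain ⟨m, hxy, hxz, hyz⟩ := exists_median hT x y z
  have := treeDist_eq_add_of_mem_support hT lam hxy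
  have := treeDist_eq_add_of_mem_support hT lam hxz
  have := treeDist_eq_add_of_mem_support hT lam hyz
  have := treeDist_comm hT lam y m
  omega

/-- A median `m` of `x, y, z` lies, by `mem_support_treePath_or`, on at least two of the paths
from `w` to `x`, `y`, `z`; the two corresponding sums are then equal and dominate the third. -/
theorem treeDist_four_point (x y z w : V) :
    δ x z + δ y w ≤ max (δ x y + δ z w) (δ x w + δ y z) := by
  obtain ⟨m, hxy, hxz, hyz⟩ := exists_median hT x y z
  have split {a b : V} (h : m ∈ (treePath T hT a b).support) : δ a b = δ m a + δ m b := by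
    rw [treeDist_eq_add_of_mem_support hT lam h, treeDist_comm hT lam a m]
  have triangle (a : V) : δ a w ≤ δ m a + δ m w := by
    rw [treeDist_comm hT lam m a]; exact treeDist_triangle hT lam a m w
  have := split hxy; have := split hxz; have := split hyz
  have := triangle x; have := triangle y; have := triangle z
  have hxy' := (mem_support_treePath_or hT (y := w) hxy).imp split split
  have hxz' := (mem_support_treePath_or hT (y := w) hxz).imp split split
  have hyz' := (mem_support_treePath_or hT (y := w) hyz).imp split split
  rw [le_max_iff]
  omega

theorem treeDist_eq_of_treeDist_eq_zero {x y : V} (h : δ x y = 0) (z : V) : δ x z = δ y z := by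
  have := treeDist_triangle hT lam x y z
  have := treeDist_triangle hT lam y x z
  have := treeDist_comm hT lam x y
  omega

theorem treeDist_eq_add_add {a b c e : V} (hace : δ a e = δ a c + δ c e)
    (hceb : δ c b = δ c e + δ e b) (hce : 0 < δ c e) : δ a b = δ a c + δ c e + δ e b := by
  have := treeDist_four_point hT lam a c e b
  have := treeDist_triangle hT lam a e b
  rw [le_max_iff] at *
  omega

theorem treeDist_eq_four {a b c e : V} (hab : δ a b = 2) (hbc : δ b c = 2) (hce : δ c e = 2)
    (hac : δ a c ≠ 2) (hae : δ a e ≠ 2) : δ a c = 4 := by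
  obtain ⟨m, hmab, hmac, hmbc⟩ := exists_median hT a b c
  have := treeDist_eq_add_of_mem_support hT lam hmab
  have := treeDist_eq_add_of_mem_support hT lam hmac
  have := treeDist_eq_add_of_mem_support hT lam hmbc
  have := treeDist_comm hT lam b m
  have := fun h : δ a c = 0 => treeDist_eq_of_treeDist_eq_zero hT lam h e
  omega

theorem treeDist_eq_two_mul_of_chain (x : ℕ → V) (hstep : ∀ j, δ (x j) (x (j + 1)) = 2)
    (hskip₂ : ∀ j, δ (x j) (x (j + 2)) ≠ 2) (hskip₃ : ∀ j, δ (x j) (x (j + 3)) ≠ 2) (n : ℕ) :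
    δ (x 0) (x n) = 2 * n := by
  have hfour (j : ℕ) : δ (x j) (x (j + 2)) = 4 :=
    treeDist_eq_four hT lam (hstep j) (hstep (j + 1)) (hstep (j + 2)) (hskip₂ j) (hskip₃ j)
  suffices h : ∀ n, δ (x 0) (x n) = 2 * n ∧ δ (x 0) (x (n + 1)) = 2 * n + 2 from (h n).1
  intro n
  induction n with
  | zero => exact ⟨treeDist_self hT lam _, hstep 0⟩
  | succ n ih =>
    refine ⟨ih.2, show δ (x 0) (x (n + 2)) = 2 * (n + 1) + 2 from ?_⟩
    have := treeDist_eq_add_add hT lam (a := x 0) (c := x n) (e := x (n + 1)) (b := x (n + 2))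
      (by rw [ih.1, ih.2, hstep]) (by rw [hfour, hstep, hstep]) (by rw [hstep]; omega)
    rw [hstep, hstep] at this
    omega

end TreeDist

open Fin.NatCast in
theorem cycleGraph_adj_natCast_add {p : ℕ} [NeZero p] (j : ℕ) {t : ℕ} (h0 : 0 < t) (ht : t < p) :
    (cycleGraph p).Adj (j : Fin p) ((j + t : ℕ) : Fin p) ↔ t = 1 ∨ t = p - 1 := by
  rw [cycleGraph_adj', Nat.cast_add, sub_add_cancel_left, add_sub_cancel_left]
  simp only [Fin.neg_def, Fin.val_natCast, Nat.mod_eq_of_lt ht,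
    Nat.mod_eq_of_lt (by omega : p - t < p)]
  omega

/-- For p ≥ 5 the cycle C_p cannot be explained w.r.t. the exactly-2-relation by any
weighted tree (whether or not distinct leaves may be at distance 0). -/
theorem stmt13 (p : ℕ) (hp : 5 ≤ p) : ¬ Explainable (cycleGraph p) 2 := by
  open Fin.NatCast in
  rintro ⟨V, -, T, hT, lam, f, -, -, hadj⟩
  have : NeZero p := ⟨by omega⟩
  have hdist (j t : ℕ) (h0 : 0 < t) (ht : t < p) :
      treeDist T hT lam (f j) (f (j + t : ℕ)) = 2 ↔ t = 1 ∨ t = p - 1 :=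
    (hadj _ _).symm.trans (cycleGraph_adj_natCast_add j h0 ht)
  have hgeo := treeDist_eq_two_mul_of_chain hT lam (fun j => f j)
    (fun j => (hdist j 1 one_pos (by omega)).2 (.inl rfl))
    (fun j h => by have := (hdist j 2 two_pos (by omega)).1 h; omega)
    (fun j h => by have := (hdist j 3 three_pos (by omega)).1 h; omega) (p - 1)
  have hclose := (hdist 0 (p - 1) (by omega) (by omega)).2 (.inr rfl)
  simp only [zero_add, Nat.cast_zero] at hclose hgeo
  omega
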